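/- arXiv:2106.08041 — 2 statements merged into one kernel-verified Lean document; each statement's English description precedes it below -/
import Mathlib

section
/- Coercivity of the energy: let η > 0. There exist constants c₁ > 0 and c₂ > 0 depending only on η such that for every smooth 2π-periodic function h : ℝ² → ℝ, c₁ ‖Δh‖₂² − c₂ ≤ ∫_Q (−(1/2) log(1+|∇h|²) + (1/2) η² (Δh)²) dx ≤ (1/2) η² ‖Δh‖₂². -/
open MeasureTheory

noncomputable section

/-- The domain `ℝ²` with the Euclidean norm. -/
abbrev R2 := EuclideanSpace ℝ (Fin 2)

/-- The fundamental cell `Q = [-π, π]²`. -/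
def Q : Set R2 := {x | ∀ i, x i ∈ Set.Icc (-Real.pi) Real.pi}

/-- A function on `ℝ²` is `2π`-periodic if it is invariant under translation by
`2π e` for each standard basis vector `e`. -/
def Periodic2 {E : Type*} (u : R2 → E) : Prop :=
  ∀ (x : R2) (i : Fin 2), u (x + EuclideanSpace.single i (2 * Real.pi)) = u x

/-- Partial derivative in the `i`-th coordinate direction. -/
def pd (i : Fin 2) (u : R2 → ℝ) (x : R2) : ℝ :=
  fderiv ℝ u x (EuclideanSpace.single i 1)

/-- The gradient as a plain vector in `Fin 2 → ℝ`. -/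
def gradv (u : R2 → ℝ) (x : R2) : Fin 2 → ℝ := fun i => pd i u x

/-- The Laplacian. -/
def lap (u : R2 → ℝ) (x : R2) : ℝ := ∑ i, pd i (pd i u) x

/-- The bilaplacian `Δ²u = Δ(Δu)`. -/
def bilap (u : R2 → ℝ) (x : R2) : ℝ := lap (lap u) x

/-- The divergence of a vector field. -/
def divg (F : R2 → Fin 2 → ℝ) (x : R2) : ℝ := ∑ i, pd i (fun y => F y i) x

/-- The nonlinearity `g(z) = -z/(1+|z|²)` acting on vectors. -/
def gvec (v : Fin 2 → ℝ) : Fin 2 → ℝ := fun i => -v i / (1 + ∑ k, v k ^ 2)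

/-- The BDF3/EP3 scheme with parameters `η, τ`:
`(11h^{n+1} - 18hⁿ + 9h^{n-1} - 2h^{n-2})/(6τ)
  = -η² Δ²h^{n+1} + ∇·(g(3∇hⁿ - 3∇h^{n-1} + ∇h^{n-2}))` pointwise. -/
def BDF3EP3 (η τ : ℝ) (h : ℕ → R2 → ℝ) : Prop :=
  ∀ n : ℕ, 2 ≤ n → ∀ x : R2,
    (11 * h (n + 1) x - 18 * h n x + 9 * h (n - 1) x - 2 * h (n - 2) x) / (6 * τ)
      = -η ^ 2 * bilap (h (n + 1)) x
        + divg (fun y =>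
            gvec (fun i => 3 * gradv (h n) y i - 3 * gradv (h (n - 1)) y i
              + gradv (h (n - 2)) y i)) x

/-- The squared `L²` norm over `Q`. -/
def L2sq (u : R2 → ℝ) : ℝ := ∫ x in Q, (u x) ^ 2

/-- The `L²` norm over `Q`. -/
def L2norm (u : R2 → ℝ) : ℝ := Real.sqrt (L2sq u)

/-- `‖∇u‖₂² = ∫_Q |∇u|² dx`. -/
def gradL2sq (u : R2 → ℝ) : ℝ := ∫ x in Q, ∑ i, (pd i u x) ^ 2

/-- The energy `E(u) = ∫_Q (-(1/2) log(1+|∇u|²) + (1/2) η² (Δu)²) dx`. -/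
def energy (η : ℝ) (u : R2 → ℝ) : ℝ :=
  ∫ x in Q, (-(1 / 2) * Real.log (1 + ∑ i, (pd i u x) ^ 2)
    + (1 / 2) * η ^ 2 * (lap u x) ^ 2)

/-!
The upper bound holds because `log (1 + |∇u|²) ≥ 0`. For the lower bound it suffices that
`∫_Q log (1 + |∇u|²) ≤ ε ‖Δu‖₂² + C / ε` for every `ε > 0`. Pointwise,
`log (1 + |∇u|²) ≤ 2 ∑ᵢ |∂ᵢu|`. By periodicity `∂ᵢu` has mean zero on every line in the direction
`eᵢ`, so it vanishes somewhere on each such line and `∫_Q |∂ᵢu| ≤ 2π ∫_Q |∂ᵢ²u|`. Next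
`|w| ≤ δ w² + 1 / (4δ)`, and two integrations by parts give
`∑ᵢ ‖∂ᵢ²u‖₂² ≤ ∑ᵢⱼ ‖∂ᵢ∂ⱼu‖₂² = ‖Δu‖₂²`.
-/

open Real Set
open scoped ContDiff

section PartialDerivatives

variable {u f g : R2 → ℝ} {x : R2}

theorem continuous_pd (hf : ContDiff ℝ 1 f) (i : Fin 2) : Continuous (pd i f) :=
  (hf.continuous_fderiv one_ne_zero).clm_apply continuous_const

theorem ContDiff.pd (hu : ContDiff ℝ ∞ u) (i : Fin 2) : ContDiff ℝ ∞ (pd i u) :=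
  (hu.fderiv_right le_rfl).clm_apply contDiff_const

theorem Periodic2.pd (hp : Periodic2 u) (i : Fin 2) : Periodic2 (pd i u) := by
  intro x j
  have hshift : (fun y => u (y + EuclideanSpace.single j (2 * π))) = u := funext (hp · j)
  simp only [_root_.pd, ← fderiv_comp_add_right, hshift]

theorem pd_mul (hf : DifferentiableAt ℝ f x) (hg : DifferentiableAt ℝ g x) (i : Fin 2) :
    pd i (fun y => f y * g y) x = pd i f x * g x + f x * pd i g x := by
  simp only [_root_.pd, fderiv_fun_mul hf hg, add_apply, smul_apply, smul_eq_mul]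
  ring

theorem pd_comm (hu : ContDiffAt ℝ 2 u x) (i j : Fin 2) :
    pd i (pd j u) x = pd j (pd i u) x := by
  have hdiff : DifferentiableAt ℝ (fderiv ℝ u) x :=
    (hu.fderiv_right (m := 1) le_rfl).differentiableAt one_ne_zero
  have hsnd (k l : Fin 2) : pd k (pd l u) x =
      fderiv ℝ (fderiv ℝ u) x (EuclideanSpace.single k 1) (EuclideanSpace.single l 1) := by
    change fderiv ℝ (fun y => fderiv ℝ u y (EuclideanSpace.single l 1)) x _ = _
    simp [fderiv_clm_apply hdiff (differentiableAt_const _)]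
  rw [hsnd, hsnd, hu.isSymmSndFDerivAt (by simp)]

theorem hasDerivAt_comp_smul_single_add (i : Fin 2) (y : R2) {t : ℝ}
    (hf : DifferentiableAt ℝ f (t • EuclideanSpace.single i 1 + y)) :
    HasDerivAt (fun t : ℝ => f (t • EuclideanSpace.single i 1 + y))
      (pd i f (t • EuclideanSpace.single i 1 + y)) t := by
  simpa [Function.comp_def, _root_.pd] using hf.hasFDerivAt.comp_hasDerivAt t
    (((hasDerivAt_id t).smul_const (EuclideanSpace.single i (1 : ℝ))).add_const y)

end PartialDerivatives

theorem abs_le_integral_abs_deriv_of_integral_eq_zero {a b : ℝ} (hab : a < b) {V W : ℝ → ℝ}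
    (hV : ∀ t, HasDerivAt V (W t) t) (hW : Continuous W) (hmean : ∫ t in a..b, V t = 0)
    {s : ℝ} (hs : s ∈ Icc a b) : |V s| ≤ ∫ t in a..b, |W t| := by
  have hVcont : Continuous V := continuous_iff_continuousAt.2 fun t => (hV t).continuousAt
  obtain ⟨c, hc, hVc⟩ := exists_eq_interval_average hab.ne hVcont.continuousOn
  rw [interval_average_eq, hmean, smul_zero] at hVc
  have hc' : c ∈ uIcc a b := uIoo_subset_uIcc_self hc
  calc |V s| = ‖∫ t in c..s, W t‖ := by
        rw [intervalIntegral.integral_eq_sub_of_hasDerivAt (fun t _ => hV t)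
          (hW.intervalIntegrable _ _), hVc, sub_zero, Real.norm_eq_abs]
    _ ≤ |(∫ t in c..s, |W t|)| := intervalIntegral.norm_integral_le_abs_integral_norm
    _ ≤ |(∫ t in a..b, |W t|)| := intervalIntegral.abs_integral_mono_interval
          (uIoc_subset_uIoc_of_uIcc_subset_uIcc (uIcc_subset_uIcc hc' (Icc_subset_uIcc hs)))
          (Filter.Eventually.of_forall fun t => abs_nonneg _) (hW.abs.intervalIntegrable _ _)
    _ = ∫ t in a..b, |W t| :=
        abs_of_nonneg (intervalIntegral.integral_nonneg hab.le fun t _ => abs_nonneg _)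

-- In `Fin 2`, `i + 1` is the coordinate other than `i`.
theorem integral_Q_eq_integral_integral {f : R2 → ℝ} (hf : Continuous f) (i : Fin 2) :
    ∫ x in Q, f x = ∫ s in -π..π, ∫ t in -π..π,
      f (t • EuclideanSpace.single i 1 + s • EuclideanSpace.single (i + 1) 1) := by
  have hcoords : ∃ Φ : ℝ × ℝ ≃ᵐ R2, MeasurePreserving Φ ∧ Φ ⁻¹' Q = Icc (-π) π ×ˢ Icc (-π) π ∧
      ⇑Φ = fun p => p.2 • EuclideanSpace.single i 1 + p.1 • EuclideanSpace.single (i + 1) 1 := by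
    let Ψ : ℝ × ℝ ≃ᵐ R2 := MeasurableEquiv.finTwoArrow.symm.trans (MeasurableEquiv.toLp 2 _)
    have hΨ : MeasurePreserving Ψ :=
      (PiLp.volume_preserving_toLp (Fin 2)).comp (volume_preserving_finTwoArrow ℝ).symm
    fin_cases i
    · refine ⟨MeasurableEquiv.prodComm.trans Ψ, hΨ.comp Measure.measurePreserving_swap, ?_, ?_⟩
      · ext p; simp [Q, Ψ, Fin.forall_fin_two, -Icc_prod_Icc]; tauto
      · ext p j; fin_cases j <;> simp [Ψ, MeasurableEquiv.prodComm]
    · refine ⟨Ψ, hΨ, ?_, ?_⟩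
      · ext p; simp [Q, Ψ, Fin.forall_fin_two, -Icc_prod_Icc]
      · ext p j; fin_cases j <;> simp [Ψ]
  obtain ⟨Φ, hΦ, hpre, happ⟩ := hcoords
  have hint :
      IntegrableOn (fun p => f (Φ p)) (Icc (-π) π ×ˢ Icc (-π) π) (volume.prod volume) := by
    rw [happ]
    exact (hf.comp' (by fun_prop)).continuousOn.integrableOn_compact
      (isCompact_Icc.prod isCompact_Icc)
  rw [← hΦ.setIntegral_preimage_emb Φ.measurableEmbedding, hpre, Measure.volume_eq_prod,
    setIntegral_prod _ hint, intervalIntegral.integral_of_le (neg_le_self pi_pos.le),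
    ← integral_Icc_eq_integral_Ioc]
  refine setIntegral_congr_fun measurableSet_Icc fun s _ => ?_
  rw [intervalIntegral.integral_of_le (neg_le_self pi_pos.le), ← integral_Icc_eq_integral_Ioc, happ]

theorem isCompact_Q : IsCompact Q := by
  have hQ : Q = WithLp.ofLp ⁻¹' univ.pi fun _ => Icc (-π) π := by
    ext x; simp [Q, Fin.forall_fin_two, Pi.le_def]; tauto
  rw [hQ]
  exact (PiLp.continuousLinearEquiv 2 ℝ fun _ : Fin 2 => ℝ).toHomeomorph.isCompact_preimage.2
    (isCompact_univ_pi fun _ => isCompact_Icc)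

theorem Continuous.integrableOn_Q {f : R2 → ℝ} (hf : Continuous f) : IntegrableOn f Q :=
  hf.continuousOn.integrableOn_compact isCompact_Q

theorem setIntegral_Q_mono_of_lines {f g : R2 → ℝ} (hf : Continuous f) (hg : Continuous g)
    (i : Fin 2) (h : ∀ s : ℝ, ∫ t in -π..π,
        f (t • EuclideanSpace.single i 1 + s • EuclideanSpace.single (i + 1) 1)
      ≤ ∫ t in -π..π, g (t • EuclideanSpace.single i 1 + s • EuclideanSpace.single (i + 1) 1)) :
    ∫ x in Q, f x ≤ ∫ x in Q, g x := by
  have hcont {φ : R2 → ℝ} (hφ : Continuous φ) : Continuous fun s : ℝ => ∫ t in -π..π,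
      φ (t • EuclideanSpace.single i 1 + s • EuclideanSpace.single (i + 1) 1) := by
    fun_prop
  rw [integral_Q_eq_integral_integral hf i, integral_Q_eq_integral_integral hg i]
  exact intervalIntegral.integral_mono_on (neg_le_self pi_pos.le)
    ((hcont hf).intervalIntegrable _ _) ((hcont hg).intervalIntegrable _ _) fun s _ => h s

section Periodic

variable {u f g : R2 → ℝ}

theorem integral_pd_comp_smul_single_add_eq_zero (hf : ContDiff ℝ 1 f) (hp : Periodic2 f)
    (i : Fin 2) (y : R2) : ∫ t in -π..π, pd i f (t • EuclideanSpace.single i 1 + y) = 0 := by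
  rw [intervalIntegral.integral_eq_sub_of_hasDerivAt
    (fun t _ => hasDerivAt_comp_smul_single_add i y (hf.differentiable one_ne_zero _))
    (((continuous_pd hf i).comp (by fun_prop)).intervalIntegrable _ _), sub_eq_zero]
  have hshift : π • EuclideanSpace.single i (1 : ℝ) + y
      = (-π) • EuclideanSpace.single i 1 + y + EuclideanSpace.single i (2 * π) := by
    ext j; by_cases hj : j = i <;> simp [hj]; ring
  rw [hshift, hp]

theorem integral_Q_pd_eq_zero (hf : ContDiff ℝ 1 f) (hp : Periodic2 f) (i : Fin 2) :
    ∫ x in Q, pd i f x = 0 := by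
  simp only [integral_Q_eq_integral_integral (continuous_pd hf i) i,
    integral_pd_comp_smul_single_add_eq_zero hf hp, intervalIntegral.integral_zero]

theorem integral_Q_pd_mul (hf : ContDiff ℝ 1 f) (hg : ContDiff ℝ 1 g) (hpf : Periodic2 f)
    (hpg : Periodic2 g) (i : Fin 2) :
    ∫ x in Q, pd i f x * g x = -∫ x in Q, f x * pd i g x := by
  have hzero := integral_Q_pd_eq_zero (hf.mul hg) (fun x j => by simp only [hpf x j, hpg x j]) i
  simp only [pd_mul (hf.differentiable one_ne_zero _) (hg.differentiable one_ne_zero _)] at hzero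
  rw [integral_add ((continuous_pd hf i).fun_mul hg.continuous).integrableOn_Q
    (hf.continuous.fun_mul (continuous_pd hg i)).integrableOn_Q] at hzero
  linarith

end Periodic

section Smooth

variable {u : R2 → ℝ}

theorem integral_Q_pd_pd_mul_pd_pd (hu : ContDiff ℝ ∞ u) (hp : Periodic2 u) (i j : Fin 2) :
    ∫ x in Q, pd i (pd i u) x * pd j (pd j u) x = ∫ x in Q, pd i (pd j u) x ^ 2 := by
  have hC1 {v : R2 → ℝ} (hv : ContDiff ℝ ∞ v) : ContDiff ℝ 1 v := hv.of_le (by norm_cast)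
  have hcomm {v : R2 → ℝ} (hv : ContDiff ℝ ∞ v) (k l : Fin 2) :
      pd k (pd l v) = pd l (pd k v) :=
    funext fun x => pd_comm (hv.of_le (by norm_cast)).contDiffAt k l
  calc ∫ x in Q, pd i (pd i u) x * pd j (pd j u) x
      = -∫ x in Q, pd i u x * pd i (pd j (pd j u)) x :=
        integral_Q_pd_mul (hC1 (hu.pd i)) (hC1 ((hu.pd j).pd j)) (hp.pd i) ((hp.pd j).pd j) i
    _ = -∫ x in Q, pd i u x * pd j (pd i (pd j u)) x := by rw [hcomm (hu.pd j) i j]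
    _ = ∫ x in Q, pd j (pd i u) x * pd i (pd j u) x := by
        rw [integral_Q_pd_mul (hC1 (hu.pd i)) (hC1 ((hu.pd j).pd i)) (hp.pd i) ((hp.pd j).pd i) j]
    _ = ∫ x in Q, pd i (pd j u) x ^ 2 := by rw [hcomm hu j i]; simp only [sq]

theorem L2sq_lap_eq_sum_integral_sq_pd_pd (hu : ContDiff ℝ ∞ u) (hp : Periodic2 u) :
    L2sq (lap u) = ∑ i, ∑ j, ∫ x in Q, pd i (pd j u) x ^ 2 := by
  have hcont (i : Fin 2) : Continuous (pd i (pd i u)) := ((hu.pd i).pd i).continuous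
  simp only [L2sq, lap, sq (∑ i, _), Finset.sum_mul_sum]
  rw [integral_finsetSum _ fun i _ =>
    (continuous_finsetSum _ fun j _ => (hcont i).fun_mul (hcont j)).integrableOn_Q]
  refine Finset.sum_congr rfl fun i _ => ?_
  rw [integral_finsetSum _ fun j _ => ((hcont i).fun_mul (hcont j)).integrableOn_Q]
  exact Finset.sum_congr rfl fun j _ => integral_Q_pd_pd_mul_pd_pd hu hp i j

theorem integral_abs_pd_comp_smul_single_add_le (hu : ContDiff ℝ ∞ u) (hp : Periodic2 u)
    (i : Fin 2) (y : R2) :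
    ∫ t in -π..π, |pd i u (t • EuclideanSpace.single i 1 + y)|
      ≤ ∫ t in -π..π, 2 * π * |pd i (pd i u) (t • EuclideanSpace.single i 1 + y)| := by
  have hbound : ∀ s ∈ Icc (-π) π, |pd i u (s • EuclideanSpace.single i 1 + y)|
      ≤ ∫ t in -π..π, |pd i (pd i u) (t • EuclideanSpace.single i 1 + y)| :=
    fun s hs => abs_le_integral_abs_deriv_of_integral_eq_zero (neg_lt_self pi_pos)
      (fun t => hasDerivAt_comp_smul_single_add i y ((hu.pd i).differentiable (by simp) _))
      (((hu.pd i).pd i).continuous.comp (by fun_prop))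
      (integral_pd_comp_smul_single_add_eq_zero (hu.of_le (by norm_cast)) hp i y) hs
  calc ∫ t in -π..π, |pd i u (t • EuclideanSpace.single i 1 + y)|
      ≤ ∫ _ in -π..π, ∫ t in -π..π, |pd i (pd i u) (t • EuclideanSpace.single i 1 + y)| :=
        intervalIntegral.integral_mono_on (neg_le_self pi_pos.le)
          (((hu.pd i).continuous.comp (by fun_prop)).abs.intervalIntegrable _ _)
          intervalIntegrable_const hbound
    _ = _ := by rw [intervalIntegral.integral_const, intervalIntegral.integral_const_mul,
          smul_eq_mul, sub_neg_eq_add, two_mul]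

theorem integral_Q_abs_pd_le (hu : ContDiff ℝ ∞ u) (hp : Periodic2 u) (i : Fin 2) :
    ∫ x in Q, |pd i u x| ≤ 2 * π * ∫ x in Q, |pd i (pd i u) x| := by
  rw [← integral_const_mul]
  exact setIntegral_Q_mono_of_lines (hu.pd i).continuous.abs
    (continuous_const.mul ((hu.pd i).pd i).continuous.abs) i
    fun s => integral_abs_pd_comp_smul_single_add_le hu hp i _

end Smooth

theorem log_one_add_sum_sq_le {ι : Type*} (s : Finset ι) (a : ι → ℝ) :
    log (1 + ∑ k ∈ s, a k ^ 2) ≤ 2 * ∑ k ∈ s, |a k| := by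
  set S := ∑ k ∈ s, |a k|
  have hS : 0 ≤ S := Finset.sum_nonneg fun _ _ => abs_nonneg _
  have hsq : ∑ k ∈ s, a k ^ 2 ≤ S ^ 2 := by
    simpa only [sq_abs] using Finset.sum_sq_le_sq_sum_of_nonneg fun k _ => abs_nonneg (a k)
  calc log (1 + ∑ k ∈ s, a k ^ 2) ≤ log ((1 + S) ^ 2) :=
        log_le_log (by positivity) (by nlinarith)
    _ = 2 * log (1 + S) := by rw [log_pow, Nat.cast_ofNat]
    _ ≤ 2 * S := by linarith [log_le_sub_one_of_pos (by positivity : 0 < 1 + S)]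

theorem abs_le_mul_sq_add {δ : ℝ} (hδ : 0 < δ) (c : ℝ) : |c| ≤ δ * c ^ 2 + 1 / (4 * δ) := by
  have hsq : δ * c ^ 2 + 1 / (4 * δ) - |c| = (2 * δ * |c| - 1) ^ 2 / (4 * δ) := by
    field_simp
    rw [← sq_abs c]
    ring
  linarith [show 0 ≤ (2 * δ * |c| - 1) ^ 2 / (4 * δ) by positivity]

theorem integral_Q_abs_le {w : R2 → ℝ} (hw : Continuous w) {δ : ℝ} (hδ : 0 < δ) :
    ∫ x in Q, |w x| ≤ δ * (∫ x in Q, w x ^ 2) + π ^ 2 / δ := by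
  have hvol : ∫ _ in Q, 1 / (4 * δ) = π ^ 2 / δ := by
    rw [integral_Q_eq_integral_integral continuous_const 0]
    simp only [intervalIntegral.integral_const, smul_eq_mul]
    field_simp
    ring
  calc ∫ x in Q, |w x| ≤ ∫ x in Q, (δ * w x ^ 2 + 1 / (4 * δ)) :=
        integral_mono hw.abs.integrableOn_Q (by fun_prop : Continuous _).integrableOn_Q
          fun x => abs_le_mul_sq_add hδ (w x)
    _ = δ * (∫ x in Q, w x ^ 2) + π ^ 2 / δ := by
        rw [integral_add (by fun_prop : Continuous _).integrableOn_Q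
          continuous_const.integrableOn_Q, integral_const_mul, hvol]

theorem integral_Q_log_le {u : R2 → ℝ} (hu : ContDiff ℝ 1 u) :
    ∫ x in Q, log (1 + ∑ i, pd i u x ^ 2) ≤ 2 * ∑ i, ∫ x in Q, |pd i u x| := by
  have hcont (i : Fin 2) : Continuous (pd i u) := continuous_pd hu i
  have hpos (x : R2) : 1 + ∑ i, pd i u x ^ 2 ≠ 0 := by positivity
  rw [← integral_finsetSum _ fun i _ => (hcont i).abs.integrableOn_Q, ← integral_const_mul]
  exact integral_mono (Continuous.log (by fun_prop) hpos).integrableOn_Q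
    (continuous_const.mul (continuous_finsetSum _ fun i _ => (hcont i).abs)).integrableOn_Q
    fun x => log_one_add_sum_sq_le _ _

theorem integral_Q_log_le_mul_L2sq_lap_add {u : R2 → ℝ} (hu : ContDiff ℝ ∞ u)
    (hp : Periodic2 u) {ε : ℝ} (hε : 0 < ε) :
    ∫ x in Q, log (1 + ∑ i, pd i u x ^ 2) ≤ ε * L2sq (lap u) + 32 * π ^ 4 / ε := by
  set δ := ε / (4 * π)
  have hδ : 0 < δ := by positivity
  have hdiag : ∑ i, ∫ x in Q, pd i (pd i u) x ^ 2 ≤ L2sq (lap u) := by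
    rw [L2sq_lap_eq_sum_integral_sq_pd_pd hu hp]
    exact Finset.sum_le_sum fun i _ =>
      Finset.single_le_sum (f := fun j => ∫ x in Q, pd i (pd j u) x ^ 2)
        (fun j _ => integral_nonneg fun x => sq_nonneg _) (Finset.mem_univ i)
  calc ∫ x in Q, log (1 + ∑ i, pd i u x ^ 2)
      ≤ 2 * ∑ i, ∫ x in Q, |pd i u x| := integral_Q_log_le (hu.of_le (by norm_cast))
    _ ≤ 2 * ∑ i, 2 * π * ∫ x in Q, |pd i (pd i u) x| := by
        gcongr with i; exact integral_Q_abs_pd_le hu hp i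
    _ ≤ 2 * ∑ i, 2 * π * (δ * (∫ x in Q, pd i (pd i u) x ^ 2) + π ^ 2 / δ) := by
        gcongr with i; exact integral_Q_abs_le ((hu.pd i).pd i).continuous hδ
    _ = 4 * π * δ * (∑ i, ∫ x in Q, pd i (pd i u) x ^ 2) + 8 * π ^ 3 / δ := by
        simp only [Fin.sum_univ_two]; ring
    _ ≤ 4 * π * δ * L2sq (lap u) + 8 * π ^ 3 / δ := by gcongr
    _ = ε * L2sq (lap u) + 32 * π ^ 4 / ε := by
        simp only [δ]; field_simp; ring

theorem energy_eq {η : ℝ} {u : R2 → ℝ} (hu : ContDiff ℝ ∞ u) :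
    energy η u = -(1 / 2) * (∫ x in Q, log (1 + ∑ i, pd i u x ^ 2))
      + 1 / 2 * η ^ 2 * L2sq (lap u) := by
  have hcont (i : Fin 2) : Continuous (pd i u) := (hu.pd i).continuous
  have hlap : Continuous (lap u) :=
    continuous_finsetSum _ fun i _ => ((hu.pd i).pd i).continuous
  have hpos (x : R2) : 1 + ∑ i, pd i u x ^ 2 ≠ 0 := by positivity
  rw [energy, integral_add
    (continuous_const.fun_mul (Continuous.log (by fun_prop) hpos)).integrableOn_Q
    (continuous_const.fun_mul (hlap.fun_pow 2)).integrableOn_Q, integral_const_mul,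
    integral_const_mul, L2sq]

/-- coercivity of the energy. For `η > 0` there are constants
`c₁, c₂ > 0` depending only on `η` such that for every smooth `2π`-periodic `h`,
`c₁ ‖Δh‖₂² - c₂ ≤ E(h) ≤ (1/2) η² ‖Δh‖₂²`. -/
theorem energy_coercive (η : ℝ) (hη : 0 < η) :
    ∃ c₁ > (0 : ℝ), ∃ c₂ > (0 : ℝ), ∀ u : R2 → ℝ,
      ContDiff ℝ (⊤ : ℕ∞) u → Periodic2 u →
        c₁ * L2sq (lap u) - c₂ ≤ energy η u ∧
        energy η u ≤ (1 / 2) * η ^ 2 * L2sq (lap u) := by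
  refine ⟨η ^ 2 / 4, by positivity, 32 * π ^ 4 / η ^ 2, by positivity, fun u hu hp => ?_⟩
  have hlog := integral_Q_log_le_mul_L2sq_lap_add hu hp (ε := η ^ 2 / 2) (by positivity)
  have hlog_nonneg : 0 ≤ ∫ x in Q, log (1 + ∑ i, pd i u x ^ 2) :=
    integral_nonneg fun x => log_nonneg (le_add_of_nonneg_right (by positivity))
  have hconst : 32 * π ^ 4 / (η ^ 2 / 2) = 2 * (32 * π ^ 4 / η ^ 2) := by
    field_simp
  rw [energy_eq hu]
  constructor <;> linarith
end
end

section
/- Root structure of the BDF3 characteristic cubic: for every s₀ with 0 < s₀ < 1/11 there exists λ_a ∈ (0,1) such that for every s with 0 < s ≤ s₀ there exist λ₁ ∈ ℝ and μ ∈ ℂ with: the cubic polynomial λ³ − 18sλ² + 9sλ − 2s factors over ℂ as (λ − λ₁)(λ − μ)(λ − μ̄); 2.1·s < λ₁ ≤ λ_a < 1; and |μ| = |μ̄| ≤ √(2/2.1) < 1. -/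
/-! The BDF3 cubic `x³ - 18sx² + 9sx - 2s` is negative at `2.1s` and positive at
`λ_a = (2 + 11s₀)/3` (since `λ_a³ > 11s₀ ≥ s(18x² - 9x + 2)` on `[0, 1]`), so it has a real root
`λ₁` in `(2.1s, λ_a]`. Dividing by `x - λ₁` leaves a real quadratic whose discriminant, multiplied by
`f'(λ₁)²`, is the cubic discriminant `-27s²(4 - 108s + 756s²) < 0`; hence its roots are a conjugate
pair `μ, μ̄` with `|μ|² = 2s/λ₁ < 2/2.1`. -/

open ComplexConjugate

theorem Complex.exists_add_conj_eq_and_mul_conj_eq {p q : ℝ} (h : p ^ 2 ≤ 4 * q) :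
    ∃ μ : ℂ, μ + conj μ = p ∧ μ * conj μ = q := by
  refine ⟨⟨p / 2, √(q - p ^ 2 / 4)⟩, ?_, ?_⟩ <;> apply Complex.ext <;>
    simp [Real.mul_self_sqrt (by linarith : 0 ≤ q - p ^ 2 / 4)] <;> ring

theorem Cubic.discr_eq_of_root {R : Type*} [CommRing R] {a b c r : R}
    (hr : r ^ 3 + a * r ^ 2 + b * r + c = 0) :
    (⟨1, a, b, c⟩ : Cubic R).discr
      = (3 * r ^ 2 + 2 * a * r + b) ^ 2 * discrim 1 (r + a) (r ^ 2 + a * r + b) := by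
  simp only [Cubic.discr, discrim]
  linear_combination (27 * (r ^ 3 + a * r ^ 2 + b * r - c) + 18 * a * b - 4 * a ^ 3) * hr

theorem Cubic.exists_eq_mul_conj_of_discr_neg {a b c r : ℝ}
    (hr : r ^ 3 + a * r ^ 2 + b * r + c = 0) (hdiscr : (⟨1, a, b, c⟩ : Cubic ℝ).discr < 0) :
    ∃ μ : ℂ, (∀ z : ℂ, z ^ 3 + a * z ^ 2 + b * z + c = (z - r) * (z - μ) * (z - conj μ)) ∧
      ‖μ‖ ^ 2 = r ^ 2 + a * r + b := by
  have hquad : discrim 1 (r + a) (r ^ 2 + a * r + b) < 0 := by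
    rw [Cubic.discr_eq_of_root hr] at hdiscr
    exact neg_of_mul_neg_right hdiscr (sq_nonneg _)
  obtain ⟨μ, hsum, hprod⟩ := Complex.exists_add_conj_eq_and_mul_conj_eq (p := -(r + a))
    (q := r ^ 2 + a * r + b) (by rw [discrim] at hquad; linarith)
  refine ⟨μ, fun z ↦ ?_, ?_⟩
  · have hrC : (r : ℂ) ^ 3 + a * r ^ 2 + b * r + c = 0 := by exact_mod_cast hr
    push_cast at hsum hprod
    linear_combination (z ^ 2 - z * r) * hsum + (r - z) * hprod + hrC
  · rw [Complex.mul_conj, Complex.normSq_eq_norm_sq] at hprod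
    exact_mod_cast hprod

theorem bdf3_discr_neg {s : ℝ} (hs : s ≠ 0) : (⟨1, -18 * s, 9 * s, -2 * s⟩ : Cubic ℝ).discr < 0 := by
  have hdiscr : (⟨1, -18 * s, 9 * s, -2 * s⟩ : Cubic ℝ).discr
      = -27 * s ^ 2 * (4 - 108 * s + 756 * s ^ 2) := by
    simp only [Cubic.discr]; ring
  rw [hdiscr]
  have hquad : 0 < 4 - 108 * s + 756 * s ^ 2 := by nlinarith [sq_nonneg (28 * s - 2)]
  have : 0 < s ^ 2 := by positivity
  nlinarith

theorem exists_bdf3_root {s s₀ : ℝ} (hs : 0 < s) (hss₀ : s ≤ s₀) (hs₀ : s₀ < 1 / 11) :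
    ∃ r ∈ Set.Ioc (2.1 * s) ((2 + 11 * s₀) / 3), r ^ 3 - 18 * s * r ^ 2 + 9 * s * r - 2 * s = 0 := by
  set lamA := (2 + 11 * s₀) / 3 with hlamA_def
  set f : ℝ → ℝ := fun x ↦ x ^ 3 - 18 * s * x ^ 2 + 9 * s * x - 2 * s
  have hf_left : f (2.1 * s) < 0 := by
    have hquad : 0 < 70.119 * s ^ 2 - 18.9 * s + 2 := by nlinarith [sq_nonneg (s - 0.135)]
    have : f (2.1 * s) = -s * (70.119 * s ^ 2 - 18.9 * s + 2) := by simp only [f]; ring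
    rw [this]
    nlinarith
  -- `18x² - 9x + 2 ≤ 11` on `[0, 1]` and `((2 + u)/3)³ - u = (1 - u)²(8 + u)/27` for `u = 11s₀`
  have hf_right : 0 ≤ f lamA := by
    have hlamA : 0 ≤ lamA ∧ lamA ≤ 1 := ⟨by linarith, by linarith⟩
    have hcoef : 18 * lamA ^ 2 - 9 * lamA + 2 ≤ 11 := by nlinarith
    have hcube : 11 * s₀ ≤ lamA ^ 3 := by
      rw [hlamA_def]; nlinarith [mul_nonneg (sq_nonneg (1 - 11 * s₀)) (by linarith : 0 ≤ 8 + 11 * s₀)]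
    simp only [f]
    nlinarith
  obtain ⟨r, hr, hfr⟩ := intermediate_value_Ioc (by linarith : 2.1 * s ≤ lamA)
    (by fun_prop : Continuous f).continuousOn ⟨hf_left, hf_right⟩
  exact ⟨r, hr, hfr⟩

/-- root structure of the BDF3 characteristic cubic. For every
`0 < s₀ < 1/11` there is `λ_a ∈ (0,1)` such that for every `0 < s ≤ s₀` the
cubic `λ³ - 18sλ² + 9sλ - 2s` factors over `ℂ` as `(λ - λ₁)(λ - μ)(λ - μ̄)` with
a real root `λ₁` satisfying `2.1 s < λ₁ ≤ λ_a < 1` and `|μ| = |μ̄| ≤ √(2/2.1) < 1`. -/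
theorem bdf3_cubic_roots (s₀ : ℝ) (hs₀ : 0 < s₀) (hs₀' : s₀ < 1 / 11) :
    ∃ lamA : ℝ, 0 < lamA ∧ lamA < 1 ∧
      ∀ s : ℝ, 0 < s → s ≤ s₀ →
        ∃ (lam₁ : ℝ) (μ : ℂ),
          (∀ lam : ℂ, lam ^ 3 - 18 * (s : ℂ) * lam ^ 2 + 9 * (s : ℂ) * lam - 2 * (s : ℂ)
            = (lam - (lam₁ : ℂ)) * (lam - μ) * (lam - (starRingEnd ℂ) μ)) ∧
          2.1 * s < lam₁ ∧ lam₁ ≤ lamA ∧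
          ‖μ‖ ≤ Real.sqrt (2 / 2.1) ∧ Real.sqrt (2 / 2.1) < 1 := by
  refine ⟨(2 + 11 * s₀) / 3, by positivity, by linarith, fun s hs hss₀ ↦ ?_⟩
  obtain ⟨r, ⟨hr_gt, hr_le⟩, hroot⟩ := exists_bdf3_root hs hss₀ hs₀'
  obtain ⟨μ, hfactor, hnorm⟩ := Cubic.exists_eq_mul_conj_of_discr_neg (r := r)
    (by linear_combination hroot) (bdf3_discr_neg hs.ne')
  have hr_pos : 0 < r := by linarith
  -- the product of the three roots is `2s`, so `|μ|² = 2s/r < 2s/(2.1s)`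
  have hnorm_sq : ‖μ‖ ^ 2 ≤ 2 / 2.1 := by
    rw [hnorm, le_div_iff₀ (by norm_num)]
    nlinarith
  refine ⟨r, μ, fun z ↦ ?_, hr_gt, hr_le, Real.le_sqrt_of_sq_le hnorm_sq, ?_⟩
  · rw [← hfactor z]; push_cast; ring
  · rw [Real.sqrt_lt' one_pos]; norm_num
end
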